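/- arXiv:2009.01495 — 3 statements merged into one kernel-verified Lean document; each statement's English description precedes it below -/
import Mathlib

section
/- Let A be a nonempty finite set, ρ : A → [0,1] with ∑_{a∈A} ρ(a) = 1, and let u(x) = x^α with α ∈ (0,1]. Define the operator (BV)(s) = max_{b ∈ B} ∑_{a ∈ A} ρ(a) · u(R(s,b,a) + γ·V(T(s,b,a))) on bounded functions V : S → ℝ with V ≥ 0, where R ≥ 1 everywhere and γ ∈ (0,1). Then B is a contraction in the sup norm with modulus αγ, i.e., ‖BV₁ − BV₂‖_∞ ≤ αγ · ‖V₁ − V₂‖_∞. -/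
open Finset

lemma key_half {α : ℝ} (hα0 : 0 < α) (hα1 : α ≤ 1) {x y : ℝ} (hy : 1 ≤ y) (hxy : y ≤ x) :
    x ^ α - y ^ α ≤ α * (x - y) := by
  rcases eq_or_lt_of_le hxy with rfl | h
  · simp
  · obtain ⟨c, hc, hderiv⟩ := exists_hasDerivAt_eq_slope (fun t => t ^ α)
      (fun t => α * t ^ (α - 1)) h
      (by
        apply ContinuousOn.rpow_const continuousOn_id
        intro t ht
        exact Or.inr hα0.le)
      (fun t ht => by
        have : HasDerivAt (fun t : ℝ => t ^ α) (α * t ^ (α - 1)) t := by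
          have := Real.hasDerivAt_rpow_const (x := t) (p := α)
            (Or.inl (by intro h0; rw [h0] at ht; linarith [ht.1]))
          simpa [mul_comm] using this
        exact this)
    have hc1 : 1 ≤ c := le_trans hy hc.1.le
    have hle : c ^ (α - 1) ≤ 1 :=
      Real.rpow_le_one_of_one_le_of_nonpos hc1 (by linarith)
    have hx0 : 0 < x - y := by linarith
    have : (x ^ α - y ^ α) / (x - y) ≤ α := by
      rw [← hderiv]
      nlinarith
    calc x ^ α - y ^ α = (x ^ α - y ^ α) / (x - y) * (x - y) := by field_simp
    _ ≤ α * (x - y) := by nlinarith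

lemma key_abs {α : ℝ} (hα0 : 0 < α) (hα1 : α ≤ 1) {x y : ℝ} (hx : 1 ≤ x) (hy : 1 ≤ y) :
    |x ^ α - y ^ α| ≤ α * |x - y| := by
  rcases le_total y x with h | h
  · have hp : y ^ α ≤ x ^ α := Real.rpow_le_rpow (by linarith) h hα0.le
    rw [abs_of_nonneg (by linarith), abs_of_nonneg (by linarith)]
    exact key_half hα0 hα1 hy h
  · have hp : x ^ α ≤ y ^ α := Real.rpow_le_rpow (by linarith) h hα0.le
    rw [abs_sub_comm, abs_sub_comm x y, abs_of_nonneg (by linarith),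
      abs_of_nonneg (by linarith)]
    exact key_half hα0 hα1 hx h

lemma sup'_abs_sub_le {B : Type} [Fintype B] [Nonempty B] (f g : B → ℝ) (c : ℝ)
    (h : ∀ b, |f b - g b| ≤ c) :
    |Finset.univ.sup' Finset.univ_nonempty f - Finset.univ.sup' Finset.univ_nonempty g| ≤ c := by
  rw [abs_sub_le_iff]
  constructor
  · rw [sub_le_iff_le_add]
    apply Finset.sup'_le
    intro b _
    have := (abs_sub_le_iff.mp (h b)).1
    linarith [Finset.le_sup' g (Finset.mem_univ b)]
  · rw [sub_le_iff_le_add]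
    apply Finset.sup'_le
    intro b _
    have := (abs_sub_le_iff.mp (h b)).2
    linarith [Finset.le_sup' f (Finset.mem_univ b)]

/-- The CPT value-iteration operator
`(BV)(s) = max_{b} ∑_{a} ρ a * (R s b a + γ * V (T s b a)) ^ α`
is a sup-norm contraction with modulus `α * γ` on nonnegative functions,
provided `R ≥ 1` everywhere, `γ ∈ (0,1)` and `α ∈ (0,1]`. -/
theorem cpt_operator_contraction
    {S A B : Type} [Fintype S] [Fintype A] [Fintype B]
    [Nonempty S] [Nonempty A] [Nonempty B]
    (T : S → B → A → S) (R : S → B → A → ℝ) (hR : ∀ s b a, 1 ≤ R s b a)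
    (γ α : ℝ) (hγ : γ ∈ Set.Ioo (0 : ℝ) 1) (hα : α ∈ Set.Ioc (0 : ℝ) 1)
    (ρ : A → ℝ) (hρ : ∀ a, ρ a ∈ Set.Icc (0 : ℝ) 1) (hρsum : ∑ a, ρ a = 1)
    (Bop : (S → ℝ) → S → ℝ)
    (hB : ∀ (V : S → ℝ) (s : S), Bop V s =
      Finset.univ.sup' Finset.univ_nonempty
        (fun b => ∑ a, ρ a * (R s b a + γ * V (T s b a)) ^ α))
    (V₁ V₂ : S → ℝ) (h1 : ∀ s, 0 ≤ V₁ s) (h2 : ∀ s, 0 ≤ V₂ s) :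
    Finset.univ.sup' Finset.univ_nonempty (fun s => |Bop V₁ s - Bop V₂ s|) ≤
      α * γ * Finset.univ.sup' Finset.univ_nonempty (fun s => |V₁ s - V₂ s|) := by
  obtain ⟨hγ0, hγ1⟩ := hγ
  obtain ⟨hα0, hα1⟩ := hα
  set M := Finset.univ.sup' Finset.univ_nonempty (fun s => |V₁ s - V₂ s|) with hM
  have hMle : ∀ s, |V₁ s - V₂ s| ≤ M := fun s =>
    Finset.le_sup' (fun s => |V₁ s - V₂ s|) (Finset.mem_univ s)
  apply Finset.sup'_le
  intro s _
  rw [hB, hB]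
  apply sup'_abs_sub_le
  intro b
  rw [← Finset.sum_sub_distrib]
  calc |∑ a, (ρ a * (R s b a + γ * V₁ (T s b a)) ^ α -
        ρ a * (R s b a + γ * V₂ (T s b a)) ^ α)|
      ≤ ∑ a, |ρ a * (R s b a + γ * V₁ (T s b a)) ^ α -
        ρ a * (R s b a + γ * V₂ (T s b a)) ^ α| := Finset.abs_sum_le_sum_abs _ _
    _ ≤ ∑ a, ρ a * (α * γ * M) := by
        apply Finset.sum_le_sum
        intro a _
        rw [← mul_sub, abs_mul, abs_of_nonneg (hρ a).1]
        have hx : 1 ≤ R s b a + γ * V₁ (T s b a) := by nlinarith [hR s b a, h1 (T s b a)]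
        have hy : 1 ≤ R s b a + γ * V₂ (T s b a) := by nlinarith [hR s b a, h2 (T s b a)]
        have := key_abs hα0 hα1 hx hy
        have heq : R s b a + γ * V₁ (T s b a) - (R s b a + γ * V₂ (T s b a)) =
            γ * (V₁ (T s b a) - V₂ (T s b a)) := by ring
        rw [heq, abs_mul, abs_of_nonneg hγ0.le] at this
        have hM' := hMle (T s b a)
        have : |(R s b a + γ * V₁ (T s b a)) ^ α - (R s b a + γ * V₂ (T s b a)) ^ α|
            ≤ α * γ * M := by
          nlinarith [mul_le_mul_of_nonneg_left hM' (mul_nonneg hα0.le hγ0.le)]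
        exact mul_le_mul_of_nonneg_left this (hρ a).1
    _ = α * γ * M := by rw [← Finset.sum_mul, hρsum, one_mul]
end

section
/- The softmax function is 1-Lipschitz-sensitive in the following sense: for Q₁, Q₂ : A → ℝ on a finite set A with β = 1, each coordinate of the softmax satisfies |softmax(Q₁)(a) − softmax(Q₂)(a)| ≤ 2·max_{a'} |Q₁(a') − Q₂(a')|. -/
/-!
If `|Q₁ - Q₂| ≤ M` pointwise, the numerators `exp (Q a)` differ by a factor at most `exp M` and so
do the partition functions, so `softmax Q₂ a ≥ exp (-2M) · softmax Q₁ a`. Since a softmax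
coordinate is at most `1`, this gives `softmax Q₁ a - softmax Q₂ a ≤ 1 - exp (-2M) ≤ 2M`,
and the same bound holds with `Q₁` and `Q₂` exchanged.
-/

open Finset Real

namespace Softmax

variable {A : Type} [Fintype A]

noncomputable def softmax (Q : A → ℝ) (a : A) : ℝ :=
  exp (Q a) / ∑ a', exp (Q a')

theorem sum_exp_pos (Q : A → ℝ) (a : A) : 0 < ∑ a', exp (Q a') :=
  sum_pos (fun _ _ => exp_pos _) ⟨a, mem_univ a⟩

theorem softmax_nonneg (Q : A → ℝ) (a : A) : 0 ≤ softmax Q a :=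
  div_nonneg (exp_pos _).le (sum_exp_pos Q a).le

theorem softmax_le_one (Q : A → ℝ) (a : A) : softmax Q a ≤ 1 :=
  (div_le_one (sum_exp_pos Q a)).2 <|
    single_le_sum (f := fun i => exp (Q i)) (fun _ _ => (exp_pos _).le) (mem_univ a)

theorem sum_exp_le_exp_mul_sum_exp {Q₁ Q₂ : A → ℝ} {M : ℝ} (h : ∀ i, Q₂ i ≤ Q₁ i + M) :
    ∑ i, exp (Q₂ i) ≤ exp M * ∑ i, exp (Q₁ i) := by
  rw [mul_sum]
  gcongr with i
  rw [← exp_add]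
  exact exp_le_exp.2 (by linarith [h i])

theorem exp_neg_two_mul_softmax_le {Q₁ Q₂ : A → ℝ} {M : ℝ} (h : ∀ i, |Q₁ i - Q₂ i| ≤ M)
    (a : A) : exp (-(2 * M)) * softmax Q₁ a ≤ softmax Q₂ a := by
  have hnum : exp (Q₁ a - M) ≤ exp (Q₂ a) :=
    exp_le_exp.2 (by linarith [(abs_le.1 (h a)).2])
  have hden : ∑ i, exp (Q₂ i) ≤ exp M * ∑ i, exp (Q₁ i) :=
    sum_exp_le_exp_mul_sum_exp fun i => by linarith [(abs_le.1 (h i)).1]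
  calc exp (-(2 * M)) * softmax Q₁ a
      = exp (Q₁ a - M) / (exp M * ∑ i, exp (Q₁ i)) := by
        rw [softmax, exp_sub, show -(2 * M) = -M + -M by ring, exp_add, exp_neg]
        field_simp
    _ ≤ exp (Q₂ a) / ∑ i, exp (Q₂ i) :=
        div_le_div₀ (exp_pos _).le hnum (sum_exp_pos Q₂ a) hden

theorem softmax_sub_softmax_le {Q₁ Q₂ : A → ℝ} {M : ℝ} (h : ∀ i, |Q₁ i - Q₂ i| ≤ M)
    (a : A) : softmax Q₁ a - softmax Q₂ a ≤ 2 * M := by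
  have hM : 0 ≤ M := (abs_nonneg _).trans (h a)
  have hexp : 1 - exp (-(2 * M)) ≤ 2 * M := by linarith [add_one_le_exp (-(2 * M))]
  calc softmax Q₁ a - softmax Q₂ a
      ≤ (1 - exp (-(2 * M))) * softmax Q₁ a := by
        linarith [exp_neg_two_mul_softmax_le h a]
    _ ≤ 2 * M * 1 := mul_le_mul hexp (softmax_le_one Q₁ a) (softmax_nonneg Q₁ a) (by positivity)
    _ = 2 * M := mul_one _

theorem abs_softmax_sub_softmax_le {Q₁ Q₂ : A → ℝ} {M : ℝ} (h : ∀ i, |Q₁ i - Q₂ i| ≤ M)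
    (a : A) : |softmax Q₁ a - softmax Q₂ a| ≤ 2 * M :=
  abs_sub_le_iff.2 ⟨softmax_sub_softmax_le h a,
    softmax_sub_softmax_le (fun i => abs_sub_comm (Q₁ i) (Q₂ i) ▸ h i) a⟩

end Softmax

open Softmax in
/-- Softmax sensitivity: for `Q₁, Q₂ : A → ℝ` on a nonempty finite set `A`
(with inverse temperature `β = 1`), each coordinate of the softmax satisfies
`|softmax Q₁ a - softmax Q₂ a| ≤ 2 * max_{a'} |Q₁ a' - Q₂ a'|`. -/
theorem softmax_sensitivity {A : Type} [Fintype A] [Nonempty A]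
    (Q₁ Q₂ : A → ℝ) :
    ∀ a : A,
      |Real.exp (Q₁ a) / (∑ a', Real.exp (Q₁ a')) -
          Real.exp (Q₂ a) / (∑ a', Real.exp (Q₂ a'))| ≤
        2 * Finset.univ.sup' Finset.univ_nonempty
          (fun a' => |Q₁ a' - Q₂ a'|) :=
  abs_softmax_sub_softmax_le fun i => le_sup' (fun a' => |Q₁ a' - Q₂ a'|) (mem_univ i)
end

section
/- If two probability weighting functions satisfy w₁ ≤ w₂ pointwise on [0,1] and agree at 0 and 1, and X is a nonnegative random variable with values sorted in increasing order x₀ ≤ ⋯ ≤ xₙ, then the CPT value with weighting w₂ is at least the CPT value with weighting w₁ for any non-decreasing nonnegative utility u (weighting-monotonicity of the rank-dependent functional via Abel summation). -/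
/-!
Abel summation rewrites the rank-dependent sum `∑ (w(Sᵢ) - w(Sᵢ₊₁)) u(xᵢ)`, with `Sᵢ` the
decumulative probability `∑_{j ≥ i} p_j`, as `w(S₀) u(x₀) - w(Sₙ₊₁) u(xₙ) + ∑ w(Sᵢ₊₁) (u(xᵢ₊₁) - u(xᵢ))`.
Since `S₀ = 1` and `Sₙ₊₁ = 0`, the boundary terms do not depend on the weighting, and each
remaining term is monotone in `w` because the increments of `u ∘ x` are nonnegative.
-/

open Finset

section AbelSummation

variable {R : Type*} [CommRing R]

theorem sum_range_succ_sub_mul_eq (g v : ℕ → R) (n : ℕ) :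
    ∑ i ∈ range (n + 1), (g i - g (i + 1)) * v i =
      g 0 * v 0 - g (n + 1) * v n + ∑ i ∈ range n, g (i + 1) * (v (i + 1) - v i) := by
  induction n with
  | zero => simp [sub_mul]
  | succ n ih =>
    rw [sum_range_succ, ih, sum_range_succ]
    ring

theorem sum_range_succ_sub_mul_le [PartialOrder R] [IsOrderedRing R] {g₁ g₂ v : ℕ → R} {n : ℕ}
    (h₀ : g₁ 0 = g₂ 0) (hlast : g₁ (n + 1) = g₂ (n + 1))
    (hg : ∀ i < n, g₁ (i + 1) ≤ g₂ (i + 1)) (hv : ∀ i < n, v i ≤ v (i + 1)) :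
    ∑ i ∈ range (n + 1), (g₁ i - g₁ (i + 1)) * v i ≤
      ∑ i ∈ range (n + 1), (g₂ i - g₂ (i + 1)) * v i := by
  rw [sum_range_succ_sub_mul_eq, sum_range_succ_sub_mul_eq, h₀, hlast]
  gcongr with i hi
  · exact sub_nonneg.mpr (hv i (mem_range.mp hi))
  · exact hg i (mem_range.mp hi)

end AbelSummation

theorem sum_Icc_mem_Icc_of_sum_range_eq_one {p : ℕ → ℝ} {n : ℕ} (hp : ∀ i ≤ n, 0 ≤ p i)
    (hpsum : ∑ i ∈ range (n + 1), p i = 1) (i : ℕ) :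
    ∑ j ∈ Icc i n, p j ∈ Set.Icc (0 : ℝ) 1 := by
  refine ⟨sum_nonneg fun j hj => hp j (mem_Icc.mp hj).2, ?_⟩
  rw [← hpsum, Nat.range_succ_eq_Icc_zero]
  exact sum_le_sum_of_subset_of_nonneg (Icc_subset_Icc (Nat.zero_le i) le_rfl)
    fun j hj _ => hp j (mem_Icc.mp hj).2

theorem cpt_monotone_in_weighting_general (n : ℕ) (x p : ℕ → ℝ)
    (hx : ∀ i ≤ n, 0 ≤ x i)
    (hsorted : ∀ i j, i ≤ j → j ≤ n → x i ≤ x j)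
    (hp : ∀ i ≤ n, 0 ≤ p i)
    (hpsum : ∑ i ∈ Finset.range (n + 1), p i = 1)
    (u : ℝ → ℝ) (hu : MonotoneOn u (Set.Ici (0 : ℝ)))
    (w₁ w₂ : ℝ → ℝ)
    (hw₁0 : w₁ 0 = 0) (hw₂0 : w₂ 0 = 0) (hw₁1 : w₁ 1 = 1) (hw₂1 : w₂ 1 = 1)
    (hle : ∀ q ∈ Set.Icc (0 : ℝ) 1, w₁ q ≤ w₂ q) :
    ∑ i ∈ Finset.range (n + 1),
        (w₁ (∑ j ∈ Finset.Icc i n, p j) -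
          w₁ (∑ j ∈ Finset.Icc (i + 1) n, p j)) * u (x i) ≤
      ∑ i ∈ Finset.range (n + 1),
        (w₂ (∑ j ∈ Finset.Icc i n, p j) -
          w₂ (∑ j ∈ Finset.Icc (i + 1) n, p j)) * u (x i) := by
  have hS₀ : ∑ j ∈ Icc 0 n, p j = 1 := by rwa [← Nat.range_succ_eq_Icc_zero]
  have hSlast : ∑ j ∈ Icc (n + 1) n, p j = 0 := by simp
  apply sum_range_succ_sub_mul_le (g₁ := fun i => w₁ (∑ j ∈ Icc i n, p j))
    (g₂ := fun i => w₂ (∑ j ∈ Icc i n, p j)) (v := fun i => u (x i))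
  · simp only [hS₀, hw₁1, hw₂1]
  · simp only [hSlast, hw₁0, hw₂0]
  · exact fun i _ => hle _ (sum_Icc_mem_Icc_of_sum_range_eq_one hp hpsum (i + 1))
  · intro i hi
    exact hu (hx i hi.le) (hx (i + 1) hi) (hsorted i (i + 1) i.le_succ hi)

/-- Weighting-monotonicity of the rank-dependent (CPT) functional: if two
probability weighting functions satisfy `w₁ ≤ w₂` pointwise on `[0,1]` and
agree at `0` and `1`, and the values are sorted nonnegatively increasing, then
for any non-decreasing nonnegative utility `u`, the CPT value with weighting
`w₂` is at least the CPT value with weighting `w₁`. -/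
theorem cpt_monotone_in_weighting (n : ℕ) (x p : ℕ → ℝ)
    (hx : ∀ i ≤ n, 0 ≤ x i)
    (hsorted : ∀ i j, i ≤ j → j ≤ n → x i ≤ x j)
    (hp : ∀ i ≤ n, 0 ≤ p i)
    (hpsum : ∑ i ∈ Finset.range (n + 1), p i = 1)
    (u : ℝ → ℝ) (hu : MonotoneOn u (Set.Ici (0 : ℝ)))
    (hu0 : ∀ y : ℝ, 0 ≤ y → 0 ≤ u y)
    (w₁ w₂ : ℝ → ℝ)
    (hw₁ : MonotoneOn w₁ (Set.Icc (0 : ℝ) 1))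
    (hw₂ : MonotoneOn w₂ (Set.Icc (0 : ℝ) 1))
    (hw₁0 : w₁ 0 = 0) (hw₂0 : w₂ 0 = 0) (hw₁1 : w₁ 1 = 1) (hw₂1 : w₂ 1 = 1)
    (hle : ∀ q ∈ Set.Icc (0 : ℝ) 1, w₁ q ≤ w₂ q) :
    ∑ i ∈ Finset.range (n + 1),
        (w₁ (∑ j ∈ Finset.Icc i n, p j) -
          w₁ (∑ j ∈ Finset.Icc (i + 1) n, p j)) * u (x i) ≤
      ∑ i ∈ Finset.range (n + 1),
        (w₂ (∑ j ∈ Finset.Icc i n, p j) -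
          w₂ (∑ j ∈ Finset.Icc (i + 1) n, p j)) * u (x i) :=
  cpt_monotone_in_weighting_general n x p hx hsorted hp hpsum u hu w₁ w₂ hw₁0 hw₂0 hw₁1 hw₂1 hle
end
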